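/- In an abstract argumentation framework, the grounded extension (least fixed point of the characteristic function) is conflict-free: no argument in it attacks another argument in it. -/
import Mathlib


/-- The grounded extension (least fixed point of the characteristic
function) of an AA framework is conflict-free. -/
theorem grounded_extension_conflict_free {Args : Type*} [Fintype Args]
    (Att : Args → Args → Prop)
    (charF : Set Args → Set Args)
    (hcharF : ∀ S, charF S = {α | ∀ β, Att β α → ∃ γ ∈ S, Att γ β})
    (G : Set Args) (hfix : charF G = G) (hleast : ∀ S, charF S = S → G ⊆ S) :
    ∀ α ∈ G, ∀ β ∈ G, ¬ Att α β := by
  -- charF is monotone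
  have hmono : Monotone charF := by
    intro A B hAB
    rw [hcharF, hcharF]
    intro α hα β hβ
    obtain ⟨γ, hγ, hatt⟩ := hα β hβ
    exact ⟨γ, hAB hγ, hatt⟩
  let f : Set Args →o Set Args := ⟨charF, hmono⟩
  -- G equals the least fixed point; in particular G ≤ any prefixed point
  have hGlfp : G ⊆ OrderHom.lfp f := hleast _ (OrderHom.map_lfp f)
  -- the conflict-free part of G
  set S : Set Args := {α | α ∈ G ∧ ∀ β ∈ G, ¬ Att α β ∧ ¬ Att β α} with hS
  have hpre : charF S ⊆ S := by
    intro α hα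
    rw [hcharF] at hα
    have hSG : S ⊆ G := fun x hx => hx.1
    have hαG : α ∈ G := by
      rw [← hfix, hcharF]
      intro β hβ
      obtain ⟨γ, hγ, hatt⟩ := hα β hβ
      exact ⟨γ, hSG hγ, hatt⟩
    refine ⟨hαG, fun β hβG => ⟨?_, ?_⟩⟩
    · -- ¬ Att α β
      intro hαβ
      -- β ∈ G = charF G, so some δ ∈ G attacks α
      have hβ' : β ∈ charF G := by rw [hfix]; exact hβG
      rw [hcharF] at hβ'
      obtain ⟨δ, hδG, hδα⟩ := hβ' α hαβ
      obtain ⟨γ, hγS, hγδ⟩ := hα δ hδα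
      exact (hγS.2 δ hδG).1 hγδ
    · -- ¬ Att β α
      intro hβα
      obtain ⟨γ, hγS, hγβ⟩ := hα β hβα
      exact (hγS.2 β hβG).1 hγβ
  have hGS : G ⊆ S := hGlfp.trans (OrderHom.lfp_le f hpre)
  intro α hα β hβ
  exact ((hGS hα).2 β hβ).1
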